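/- arXiv:2101.03390 — 5 statements merged into one kernel-verified Lean document; each statement's English description precedes it below -/
import Mathlib

section
/- For every natural number p and every real polynomial q of degree at most p, the bubble-weighted inverse inequality ∫_{-1}^{1} (1 - x^2) (q'(x))^2 dx ≤ p(p+1) ∫_{-1}^{1} (q(x))^2 dx holds, where q' denotes the derivative of q. -/
/-!
Integrating by parts against the weight `1 - x²`, which vanishes at `±1`, turns the left-hand side
into `∫ (L q) q` for the Legendre operator `L q = ((x² - 1) q')'`. This operator is symmetric and
triangular on the monomial basis: on polynomials of degree at most `n` it agrees with
multiplication by `n (n + 1)` up to terms of degree `< n`. Induct on `p`: write `q = a P + r`,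
where `P = (d/dx)^p (x² - 1)^p` is the Rodrigues polynomial, orthogonal to every polynomial of
degree `< p` by repeated integration by parts, and `deg r < p`. The cross terms vanish on both
sides, `∫ (L P) P = p (p + 1) ∫ P²`, and the bound for `q` follows from the bound for `r`.
-/

open Polynomial

section LegendreOperator

variable {R : Type*} [CommRing R]

noncomputable def legendreOp (f : R[X]) : R[X] := derivative ((X ^ 2 - 1) * derivative f)

theorem coeff_legendreOp (f : R[X]) (k : ℕ) :
    (legendreOp f).coeff k = k * (k + 1) * f.coeff k - (k + 1) * (k + 2) * f.coeff (k + 2) := by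
  simp only [legendreOp, coeff_derivative, sub_mul, one_mul, coeff_sub, coeff_X_pow_mul']
  rcases k with _ | k
  · rw [if_neg (by omega)]; push_cast; ring
  · rw [if_pos (by omega), show k + 1 + 1 - 2 = k by omega]; push_cast; ring

theorem degree_legendreOp_lt {f : R[X]} {n : ℕ} (hf : f.degree < n) :
    (legendreOp f).degree < n := by
  rw [degree_lt_iff_coeff_zero] at hf ⊢
  intro m hm
  rw [coeff_legendreOp, hf m hm, hf (m + 2) (by omega)]
  ring

theorem degree_legendreOp_sub_lt {f : R[X]} {n : ℕ} (hf : f.natDegree ≤ n) :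
    (legendreOp f - C ((n * (n + 1) : ℕ) : R) * f).degree < n := by
  rw [degree_lt_iff_coeff_zero]
  intro m hm
  rw [coeff_sub, coeff_C_mul, coeff_legendreOp,
    coeff_eq_zero_of_natDegree_lt (n := m + 2) (by omega)]
  rcases hm.eq_or_lt with rfl | hlt
  · push_cast; ring
  · rw [coeff_eq_zero_of_natDegree_lt (hf.trans_lt hlt)]; ring

end LegendreOperator

theorem isRoot_iterate_derivative_pow {R : Type*} [CommRing R] {q : R[X]} {t : R}
    (ht : q.IsRoot t) {m n : ℕ} (hmn : m < n) : (derivative^[m] (q ^ n)).IsRoot t := by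
  obtain ⟨s, hs⟩ := pow_sub_dvd_iterate_derivative_of_pow_dvd m (dvd_refl (q ^ n))
  rw [IsRoot, hs, eval_mul, eval_pow, ht.eq_zero, zero_pow (by omega), zero_mul]

section Rodrigues

variable (R : Type*) [CommRing R]

noncomputable def rodrigues (n : ℕ) : R[X] := derivative^[n] ((X ^ 2 - 1) ^ n)

theorem natDegree_rodrigues_le (n : ℕ) : (rodrigues R n).natDegree ≤ n := by
  have hdeg : ((X ^ 2 - 1 : R[X]) ^ n).natDegree ≤ n * 2 :=
    natDegree_pow_le_of_le n (by compute_degree)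
  exact (natDegree_iterate_derivative _ n).trans (by omega)

theorem coeff_rodrigues_self (n : ℕ) :
    (rodrigues R n).coeff n = ((n + n).descFactorial n : R) := by
  have hlead : ((X ^ 2 - 1 : R[X]) ^ n).coeff (n + n) = 1 := by
    rw [← two_mul, mul_comm, coeff_pow_of_natDegree_le (by compute_degree)]
    simp [coeff_one]
  rw [rodrigues, coeff_iterate_derivative, hlead, nsmul_one]

theorem coeff_rodrigues_self_ne_zero [CharZero R] (n : ℕ) : (rodrigues R n).coeff n ≠ 0 := by
  rw [coeff_rodrigues_self, Nat.cast_ne_zero, Ne, Nat.descFactorial_eq_zero_iff_lt]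
  omega

end Rodrigues

theorem exists_eq_C_mul_add_degree_lt {K : Type*} [Field K] {q v : K[X]} {n : ℕ}
    (hq : q.natDegree ≤ n) (hv : v.natDegree ≤ n) (hvn : v.coeff n ≠ 0) :
    ∃ (a : K) (r : K[X]), q = C a * v + r ∧ r.degree < n := by
  refine ⟨q.coeff n / v.coeff n, q - C (q.coeff n / v.coeff n) * v, by ring, ?_⟩
  rw [degree_lt_iff_coeff_zero]
  intro m hm
  rw [coeff_sub, coeff_C_mul]
  rcases hm.eq_or_lt with rfl | hlt
  · rw [div_mul_cancel₀ _ hvn, sub_self]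
  · rw [coeff_eq_zero_of_natDegree_lt (hq.trans_lt hlt),
      coeff_eq_zero_of_natDegree_lt (hv.trans_lt hlt), mul_zero, sub_zero]

noncomputable def polyIntegral (a b : ℝ) : ℝ[X] →ₗ[ℝ] ℝ where
  toFun f := ∫ x in a..b, f.eval x
  map_add' f g := by
    simp only [eval_add]
    exact intervalIntegral.integral_add (f.continuous.intervalIntegrable _ _)
      (g.continuous.intervalIntegrable _ _)
  map_smul' c f := by
    simp only [eval_smul, smul_eq_mul, RingHom.id_apply]
    exact intervalIntegral.integral_const_mul c _

section PolyIntegral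

variable {a b : ℝ}

theorem polyIntegral_apply (f : ℝ[X]) : polyIntegral a b f = ∫ x in a..b, f.eval x := rfl

theorem polyIntegral_C_mul (c : ℝ) (f : ℝ[X]) :
    polyIntegral a b (C c * f) = c * polyIntegral a b f := by
  rw [C_mul', map_smul, smul_eq_mul]

theorem polyIntegral_mul_sq_C_mul_add (w u v : ℝ[X]) (c : ℝ) :
    polyIntegral a b (w * (C c * u + v) * (C c * u + v)) =
      c ^ 2 * polyIntegral a b (w * u * u) + 2 * c * polyIntegral a b (w * u * v) +
        polyIntegral a b (w * v * v) := by
  have hexpand : w * (C c * u + v) * (C c * u + v) =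
      C (c ^ 2) * (w * u * u) + C (2 * c) * (w * u * v) + w * v * v := by
    simp only [map_pow, map_mul, map_ofNat]
    ring
  rw [hexpand, map_add, map_add, polyIntegral_C_mul, polyIntegral_C_mul]

theorem polyIntegral_mul_self_nonneg (hab : a ≤ b) (f : ℝ[X]) : 0 ≤ polyIntegral a b (f * f) :=
  intervalIntegral.integral_nonneg hab fun x _ ↦ by simpa only [eval_mul] using mul_self_nonneg _

theorem polyIntegral_derivative (f : ℝ[X]) :
    polyIntegral a b (derivative f) = f.eval b - f.eval a :=
  intervalIntegral.integral_eq_sub_of_hasDerivAt (fun x _ ↦ f.hasDerivAt x)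
    (f.derivative.continuous.intervalIntegrable _ _)

theorem polyIntegral_derivative_mul (f g : ℝ[X]) :
    polyIntegral a b (derivative f * g) =
      (f * g).eval b - (f * g).eval a - polyIntegral a b (f * derivative g) := by
  rw [eq_sub_iff_add_eq, ← map_add, ← derivative_mul, polyIntegral_derivative]

theorem polyIntegral_iterate_derivative_mul {f : ℝ[X]} {m : ℕ}
    (hf : ∀ i < m, (derivative^[i] f).IsRoot a ∧ (derivative^[i] f).IsRoot b) (g : ℝ[X]) :
    polyIntegral a b (derivative^[m] f * g) =
      (-1) ^ m * polyIntegral a b (f * derivative^[m] g) := by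
  induction m generalizing g with
  | zero => simp
  | succ m ih =>
    obtain ⟨ha, hb⟩ := hf m m.lt_succ_self
    rw [Function.iterate_succ_apply', polyIntegral_derivative_mul, eval_mul, eval_mul, ha.eq_zero,
      hb.eq_zero, ih (fun i hi ↦ hf i (hi.trans m.lt_succ_self)), Function.iterate_succ_apply]
    ring

end PolyIntegral

theorem polyIntegral_bubble_eq (f g : ℝ[X]) :
    polyIntegral (-1) 1 ((1 - X ^ 2) * derivative f * derivative g) =
      polyIntegral (-1) 1 (legendreOp f * g) := by
  have hboundary : ∀ t : ℝ, t ^ 2 = 1 → ((X ^ 2 - 1) * derivative f * g).eval t = 0 :=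
    fun t ht ↦ by simp [ht]
  rw [legendreOp, polyIntegral_derivative_mul, hboundary 1 (one_pow 2),
    hboundary (-1) (by norm_num), sub_zero, zero_sub, ← map_neg]
  congr 1
  ring

theorem polyIntegral_rodrigues_mul_eq_zero {n : ℕ} {g : ℝ[X]} (hg : g.degree < n) :
    polyIntegral (-1) 1 (rodrigues ℝ n * g) = 0 := by
  have hroots : ∀ i < n, (derivative^[i] ((X ^ 2 - 1 : ℝ[X]) ^ n)).IsRoot (-1) ∧
      (derivative^[i] ((X ^ 2 - 1 : ℝ[X]) ^ n)).IsRoot 1 := fun i hi ↦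
    ⟨isRoot_iterate_derivative_pow (by simp) hi, isRoot_iterate_derivative_pow (by simp) hi⟩
  rw [rodrigues, polyIntegral_iterate_derivative_mul hroots,
    iterate_derivative_eq_zero_of_degree_lt hg, mul_zero, map_zero, mul_zero]

theorem polyIntegral_bubble_rodrigues_eq_zero {n : ℕ} {g : ℝ[X]} (hg : g.degree < n) :
    polyIntegral (-1) 1 ((1 - X ^ 2) * derivative (rodrigues ℝ n) * derivative g) = 0 := by
  rw [mul_right_comm, polyIntegral_bubble_eq, mul_comm,
    polyIntegral_rodrigues_mul_eq_zero (degree_legendreOp_lt hg)]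

theorem polyIntegral_bubble_rodrigues_self (n : ℕ) :
    polyIntegral (-1) 1 ((1 - X ^ 2) * derivative (rodrigues ℝ n) * derivative (rodrigues ℝ n)) =
      (n * (n + 1) : ℕ) * polyIntegral (-1) 1 (rodrigues ℝ n * rodrigues ℝ n) := by
  set P := rodrigues ℝ n
  have hsplit : legendreOp P * P =
      P * (legendreOp P - C ((n * (n + 1) : ℕ) : ℝ) * P) + C ((n * (n + 1) : ℕ) : ℝ) * (P * P) := by
    ring
  rw [polyIntegral_bubble_eq, hsplit, map_add, polyIntegral_C_mul,
    polyIntegral_rodrigues_mul_eq_zero (degree_legendreOp_sub_lt (natDegree_rodrigues_le ℝ n)),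
    zero_add]

theorem polyIntegral_bubble_le (p : ℕ) {q : ℝ[X]} (hq : q.natDegree ≤ p) :
    polyIntegral (-1) 1 ((1 - X ^ 2) * derivative q * derivative q) ≤
      p * (p + 1) * polyIntegral (-1) 1 (q * q) := by
  induction p generalizing q with
  | zero =>
    rw [eq_C_of_natDegree_le_zero hq, derivative_C]
    simp
  | succ p ih =>
    set P := rodrigues ℝ (p + 1)
    obtain ⟨a, r, rfl, hr⟩ := exists_eq_C_mul_add_degree_lt hq (natDegree_rodrigues_le ℝ (p + 1))
      (coeff_rodrigues_self_ne_zero ℝ (p + 1))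
    have hr_le : r.natDegree ≤ p :=
      natDegree_le_iff_coeff_eq_zero.2 fun N hN ↦ (degree_lt_iff_coeff_zero r _).1 hr N hN
    have hnorm := polyIntegral_mul_sq_C_mul_add (a := -1) (b := 1) 1 P r a
    simp only [one_mul] at hnorm
    rw [derivative_add, derivative_C_mul, polyIntegral_mul_sq_C_mul_add, hnorm,
      polyIntegral_bubble_rodrigues_self, polyIntegral_bubble_rodrigues_eq_zero hr,
      polyIntegral_rodrigues_mul_eq_zero hr]
    have hnonneg := polyIntegral_mul_self_nonneg (show (-1 : ℝ) ≤ 1 by norm_num)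
    have hr_bound := ih hr_le
    push_cast
    nlinarith [hnonneg r, hnonneg P, sq_nonneg a]

/-- Bubble-weighted inverse inequality on the reference interval (-1,1):
for any polynomial `q` of degree at most `p`,
`∫_{-1}^{1} (1 - x^2) (q'(x))^2 dx ≤ p(p+1) ∫_{-1}^{1} (q(x))^2 dx`. -/
theorem bubble_weighted_inverse_inequality (p : ℕ) (q : Polynomial ℝ)
    (hq : q.natDegree ≤ p) :
    ∫ x in (-1 : ℝ)..1, (1 - x ^ 2) * (q.derivative.eval x) ^ 2 ≤
      (p : ℝ) * (p + 1) * ∫ x in (-1 : ℝ)..1, (q.eval x) ^ 2 := by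
  calc ∫ x in (-1 : ℝ)..1, (1 - x ^ 2) * (q.derivative.eval x) ^ 2
      = polyIntegral (-1) 1 ((1 - X ^ 2) * derivative q * derivative q) := by
        simp [polyIntegral_apply, sq, mul_assoc]
    _ ≤ p * (p + 1) * polyIntegral (-1) 1 (q * q) := polyIntegral_bubble_le p hq
    _ = (p : ℝ) * (p + 1) * ∫ x in (-1 : ℝ)..1, (q.eval x) ^ 2 := by
        simp [polyIntegral_apply, sq]
end

section
/- Let a < b be real numbers, p a natural number, and q a real polynomial of degree at most p. Then the scaled bubble-weighted inverse inequality ∫_{a}^{b} (x - a)(b - x) (q'(x))^2 dx ≤ p(p+1) ∫_{a}^{b} (q(x))^2 dx holds, with a constant independent of the interval length b - a. -/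
/-!
The Legendre operator `L q = -(w q')'`, `w = (x - a)(b - x)`, is symmetric for the `L²(a, b)`
inner product: integration by parts gives `⟪L q, r⟫ = ∫ w q' r'`, with no boundary term since `w`
vanishes at `a` and `b`. It preserves degree `≤ n` and multiplies the coefficient of `xⁿ` by
`n(n + 1)`, so a nonzero polynomial `g` of degree `≤ n` orthogonal to all lower degrees (which
exists by a dimension count) satisfies `L g = n(n + 1) g`. Writing `q = r + c g` with
`deg r < n`, the cross terms vanish and `⟪L q, q⟫ ≤ n(n + 1) ⟪q, q⟫` follows by induction on `n`.
-/

open Polynomial MeasureTheory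

namespace Polynomial

variable {a b : ℝ}

theorem intervalIntegrable_eval (a b : ℝ) (q : ℝ[X]) :
    IntervalIntegrable (fun x ↦ q.eval x) volume a b :=
  q.continuous.intervalIntegrable a b

noncomputable def intervalIntegralₗ (a b : ℝ) : ℝ[X] →ₗ[ℝ] ℝ where
  toFun q := ∫ x in a..b, q.eval x
  map_add' q r := by
    simp only [eval_add]
    exact intervalIntegral.integral_add (intervalIntegrable_eval a b q)
      (intervalIntegrable_eval a b r)
  map_smul' c q := by
    simp only [eval_smul, smul_eq_mul, RingHom.id_apply]
    exact intervalIntegral.integral_const_mul c _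

theorem intervalIntegralₗ_apply (q : ℝ[X]) :
    intervalIntegralₗ a b q = ∫ x in a..b, q.eval x := rfl

theorem intervalIntegralₗ_derivative (q : ℝ[X]) :
    intervalIntegralₗ a b (derivative q) = q.eval b - q.eval a :=
  intervalIntegral.integral_deriv_eq_sub' (fun x ↦ q.eval x) (_root_.funext fun _ ↦ q.deriv)
    (fun _ _ ↦ q.differentiableAt) (derivative q).continuous.continuousOn

noncomputable def l2Form (a b : ℝ) : LinearMap.BilinForm ℝ ℝ[X] :=
  (LinearMap.mul ℝ ℝ[X]).compr₂ (intervalIntegralₗ a b)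

theorem l2Form_eq (q r : ℝ[X]) : l2Form a b q r = intervalIntegralₗ a b (q * r) := rfl

theorem l2Form_apply (q r : ℝ[X]) :
    l2Form a b q r = ∫ x in a..b, q.eval x * r.eval x := by
  simp [l2Form, intervalIntegralₗ_apply]

theorem l2Form_comm (q r : ℝ[X]) : l2Form a b q r = l2Form a b r q := by
  simp only [l2Form_apply, mul_comm]

theorem l2Form_self_nonneg (hab : a ≤ b) (q : ℝ[X]) : 0 ≤ l2Form a b q q := by
  rw [l2Form_apply]
  exact intervalIntegral.integral_nonneg hab fun x _ ↦ mul_self_nonneg _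

theorem l2Form_self_pos (hab : a < b) {q : ℝ[X]} (hq : q ≠ 0) : 0 < l2Form a b q q := by
  rw [l2Form_apply, intervalIntegral.integral_pos_iff_support_of_nonneg_ae
    (Filter.Eventually.of_forall fun x ↦ mul_self_nonneg _)
    ((intervalIntegrable_eval a b q).mul_continuousOn q.continuous.continuousOn)]
  refine ⟨hab, ?_⟩
  have hsupp : Function.support (fun x ↦ q.eval x * q.eval x) ∩ Set.Ioc a b =
      Set.Ioc a b \ {x | q.IsRoot x} := by
    ext x; simp [and_comm]
  rw [hsupp, measure_sdiff_null ((finite_setOfPred_isRoot hq).measure_zero _), Real.volume_Ioc]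
  simpa using hab

theorem eq_zero_of_l2Form_self_eq_zero (hab : a < b) {q : ℝ[X]} (hq : l2Form a b q q = 0) :
    q = 0 := by
  by_contra h
  exact (l2Form_self_pos hab h).ne' hq

noncomputable def bubble (a b : ℝ) : ℝ[X] := (X - C a) * (C b - X)

theorem eval_bubble (x : ℝ) : (bubble a b).eval x = (x - a) * (b - x) := by
  simp [bubble]

noncomputable def legendreOp (a b : ℝ) : ℝ[X] →ₗ[ℝ] ℝ[X] :=
  -(derivative ∘ₗ LinearMap.mulLeft ℝ (bubble a b) ∘ₗ derivative)

theorem legendreOp_apply (q : ℝ[X]) :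
    legendreOp a b q = -derivative (bubble a b * derivative q) := rfl

theorem l2Form_legendreOp (q r : ℝ[X]) :
    l2Form a b (legendreOp a b q) r =
      ∫ x in a..b, (x - a) * (b - x) * (derivative q).eval x * (derivative r).eval x := by
  have hboundary : intervalIntegralₗ a b (derivative (bubble a b * derivative q * r)) = 0 := by
    rw [intervalIntegralₗ_derivative]
    simp [eval_bubble]
  rw [derivative_mul, map_add] at hboundary
  rw [l2Form_eq, legendreOp_apply, neg_mul, map_neg, neg_eq_iff_add_eq_zero.mpr hboundary,
    intervalIntegralₗ_apply]
  simp [eval_bubble]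

theorem l2Form_legendreOp_comm (q r : ℝ[X]) :
    l2Form a b (legendreOp a b q) r = l2Form a b (legendreOp a b r) q := by
  simp only [l2Form_legendreOp, mul_right_comm]

theorem coeff_X_mul_derivative {R : Type*} [CommSemiring R] (q : R[X]) (k : ℕ) :
    (X * derivative q).coeff k = k * q.coeff k := by
  rcases k with _ | k
  · simp
  · rw [coeff_X_mul, coeff_derivative]
    push_cast
    ring

theorem coeff_legendreOp (q : ℝ[X]) (k : ℕ) :
    (legendreOp a b q).coeff k = k * (k + 1) * q.coeff k - (a + b) * (k + 1) ^ 2 * q.coeff (k + 1)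
      + a * b * ((k + 1) * (k + 2)) * q.coeff (k + 2) := by
  have hexpand : bubble a b * derivative q =
      -(X * (X * derivative q)) + C (a + b) * (X * derivative q) - C (a * b) * derivative q := by
    simp only [bubble, C_add, C_mul]; ring
  rw [legendreOp_apply, hexpand, coeff_neg, coeff_derivative, coeff_sub, coeff_add, coeff_neg,
    coeff_X_mul, coeff_C_mul, coeff_C_mul, coeff_X_mul_derivative, coeff_X_mul_derivative,
    coeff_derivative]
  push_cast
  ring

theorem legendreOp_mem_degreeLT {n : ℕ} {q : ℝ[X]} (hq : q ∈ ℝ[X]_n) :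
    legendreOp a b q ∈ ℝ[X]_n := by
  rw [mem_degreeLT, degree_lt_iff_coeff_zero] at hq ⊢
  intro m hm
  rw [coeff_legendreOp, hq m hm, hq (m + 1) (by omega), hq (m + 2) (by omega)]
  ring

theorem legendreOp_sub_smul_mem_degreeLT {n : ℕ} {q : ℝ[X]} (hq : q ∈ ℝ[X]_(n + 1)) :
    legendreOp a b q - ((n : ℝ) * (n + 1)) • q ∈ ℝ[X]_n := by
  rw [mem_degreeLT, degree_lt_iff_coeff_zero] at hq ⊢
  intro m hm
  rw [coeff_sub, coeff_smul, coeff_legendreOp, hq (m + 1) (by omega), hq (m + 2) (by omega)]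
  rcases hm.eq_or_lt with rfl | hm
  · simp
  · simp [hq m hm]

theorem exists_ne_zero_forall_l2Form_eq_zero (a b : ℝ) (n : ℕ) :
    ∃ g ∈ ℝ[X]_(n + 1), g ≠ 0 ∧ ∀ r ∈ ℝ[X]_n, l2Form a b g r = 0 := by
  let restrict : ℝ[X]_(n + 1) →ₗ[ℝ] ℝ[X]_n →ₗ[ℝ] ℝ :=
    (l2Form a b).compl₁₂ (Submodule.subtype _) (Submodule.subtype _)
  have hrank : Module.finrank ℝ (ℝ[X]_n →ₗ[ℝ] ℝ) < Module.finrank ℝ (ℝ[X]_(n + 1)) := by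
    simp [(degreeLTEquiv ℝ _).finrank_eq]
  obtain ⟨g, hg, hg0⟩ :=
    (Submodule.ne_bot_iff _).mp (LinearMap.ker_ne_bot_of_finrank_lt (f := restrict) hrank)
  refine ⟨g, g.2, by simpa using hg0, fun r hr ↦ ?_⟩
  exact LinearMap.congr_fun (LinearMap.mem_ker.mp hg) ⟨r, hr⟩

theorem exists_eq_add_smul_of_coeff_ne_zero {K : Type*} [Field K] {n : ℕ} {g q : K[X]}
    (hg : g ∈ K[X]_(n + 1)) (hgn : g.coeff n ≠ 0) (hq : q ∈ K[X]_(n + 1)) :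
    ∃ r ∈ K[X]_n, ∃ c : K, q = r + c • g := by
  refine ⟨q - (q.coeff n / g.coeff n) • g, ?_, _, (sub_add_cancel _ _).symm⟩
  rw [mem_degreeLT, degree_lt_iff_coeff_zero] at hg hq ⊢
  intro m hm
  rcases hm.eq_or_lt with rfl | hm
  · simp [hgn]
  · simp [hg m hm, hq m hm]

section Orthogonal

variable {n : ℕ} {g : ℝ[X]}

theorem coeff_ne_zero_of_forall_l2Form_eq_zero (hab : a < b) (hg : g ∈ ℝ[X]_(n + 1))
    (hg0 : g ≠ 0) (horth : ∀ r ∈ ℝ[X]_n, l2Form a b g r = 0) : g.coeff n ≠ 0 := by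
  intro hn
  have hgn : g ∈ ℝ[X]_n := by
    rw [mem_degreeLT, degree_lt_iff_coeff_zero] at hg ⊢
    intro m hm
    rcases hm.eq_or_lt with rfl | hm
    exacts [hn, hg m hm]
  exact hg0 (eq_zero_of_l2Form_self_eq_zero hab (horth g hgn))

theorem legendreOp_eq_smul_of_forall_l2Form_eq_zero (hab : a < b) (hg : g ∈ ℝ[X]_(n + 1))
    (horth : ∀ r ∈ ℝ[X]_n, l2Form a b g r = 0) :
    legendreOp a b g = ((n : ℝ) * (n + 1)) • g := by
  set D := legendreOp a b g - ((n : ℝ) * (n + 1)) • g with hD_def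
  have hD : D ∈ ℝ[X]_n := legendreOp_sub_smul_mem_degreeLT hg
  have hDD : l2Form a b D D = 0 := calc
    l2Form a b D D = l2Form a b (legendreOp a b g) D - (n * (n + 1)) * l2Form a b g D := by
      rw [hD_def, LinearMap.map_sub₂, LinearMap.map_smul₂, smul_eq_mul]
    _ = 0 := by
      rw [l2Form_legendreOp_comm, l2Form_comm, horth _ (legendreOp_mem_degreeLT hD), horth _ hD]
      ring
  exact sub_eq_zero.mp (eq_zero_of_l2Form_self_eq_zero hab hDD)

end Orthogonal

theorem l2Form_legendreOp_self_le (hab : a < b) {p : ℕ} {q : ℝ[X]} (hq : q ∈ ℝ[X]_(p + 1)) :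
    l2Form a b (legendreOp a b q) q ≤ p * (p + 1) * l2Form a b q q := by
  induction p generalizing q with
  | zero =>
    have hLq : legendreOp a b q ∈ ℝ[X]_0 := by simpa using legendreOp_sub_smul_mem_degreeLT hq
    rw [mem_degreeLT, Nat.cast_zero, WithBot.lt_zero_iff_eq_bot, degree_eq_bot] at hLq
    simp [hLq]
  | succ n ih =>
    obtain ⟨g, hg, hg0, horth⟩ := exists_ne_zero_forall_l2Form_eq_zero a b (n + 1)
    obtain ⟨r, hr, c, rfl⟩ := exists_eq_add_smul_of_coeff_ne_zero hg
      (coeff_ne_zero_of_forall_l2Form_eq_zero hab hg hg0 horth) hq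
    have hLg := legendreOp_eq_smul_of_forall_l2Form_eq_zero hab hg horth
    have hgr : l2Form a b g r = 0 := horth r hr
    have hLrg : l2Form a b (legendreOp a b r) g = 0 := by
      rw [l2Form_legendreOp_comm, hLg, map_smul, LinearMap.smul_apply, hgr, smul_zero]
    simp only [map_add, map_smul, LinearMap.add_apply, LinearMap.smul_apply, hLg, hgr, hLrg,
      l2Form_comm r g, smul_eq_mul, mul_zero, zero_add, add_zero]
    have hmono : (n : ℝ) * (n + 1) * l2Form a b r r ≤ (n + 1) * (n + 1 + 1) * l2Form a b r r :=
      mul_le_mul_of_nonneg_right (by nlinarith) (l2Form_self_nonneg hab.le r)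
    push_cast
    linear_combination ih hr + hmono

end Polynomial

/-- Scaled bubble-weighted inverse inequality on (a,b):
for any polynomial `q` of degree at most `p`,
`∫_{a}^{b} (x-a)(b-x) (q'(x))^2 dx ≤ p(p+1) ∫_{a}^{b} (q(x))^2 dx`,
with constant independent of the interval length. -/
theorem bubble_weighted_inverse_inequality_scaled (a b : ℝ) (hab : a < b)
    (p : ℕ) (q : Polynomial ℝ) (hq : q.natDegree ≤ p) :
    ∫ x in a..b, (x - a) * (b - x) * (q.derivative.eval x) ^ 2 ≤
      (p : ℝ) * (p + 1) * ∫ x in a..b, (q.eval x) ^ 2 := by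
  have hq' : q ∈ ℝ[X]_(p + 1) :=
    mem_degreeLT.2 (degree_le_natDegree.trans_lt (by exact_mod_cast Nat.lt_succ_of_le hq))
  have h := l2Form_legendreOp_self_le hab hq'
  rw [l2Form_legendreOp, l2Form_apply] at h
  simpa only [sq, ← mul_assoc] using h
end

section
/- There exists a constant C > 0 such that for every natural number p and every real polynomial q of degree at most p, the L²-inverse (Markov-type) estimate ‖q'‖_{L²(-1,1)} ≤ C (p+1)^2 ‖q‖_{L²(-1,1)} holds, i.e. ∫_{-1}^{1} (q'(x))^2 dx ≤ C^2 (p+1)^4 ∫_{-1}^{1} (q(x))^2 dx. -/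
/-!
Expand `q = ∑_{n ≤ p} aₙ Rₙ` in the Rodrigues polynomials `Rₙ = Dⁿ (X² - 1)ⁿ`. They are
orthogonal in `L²(-1,1)` with `2 Rₙ(±1)² = (2n + 1) ‖Rₙ‖²`, so Cauchy–Schwarz in the
coefficients gives the endpoint bound `q(±1)² ≤ (p + 1)² / 2 · ‖q‖²`. Integrating `‖Rₙ'‖²` by
parts leaves only boundary terms, since `Rₙ ⊥ Rₙ''`, and the endpoint bound for `Rₙ'` turns them
into `‖Rₙ'‖² ≤ 2 (n + 1)³ ‖Rₙ‖²`. Hence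
`‖q'‖² ≤ (p + 1) ∑ aₙ² ‖Rₙ'‖² ≤ 2 (p + 1)⁴ ∑ aₙ² ‖Rₙ‖² = 2 (p + 1)⁴ ‖q‖²`.
-/

open Polynomial Finset
open scoped Nat

namespace LinearMap.BilinForm

variable {R M ι : Type*} [CommRing R] [AddCommGroup M] [Module R M] (B : LinearMap.BilinForm R M)

theorem apply_sum_smul_sum_smul_of_isOrthoᵢ {v : ι → M} (hv : B.IsOrthoᵢ v) (s : Finset ι)
    (a : ι → R) :
    B (∑ i ∈ s, a i • v i) (∑ i ∈ s, a i • v i) = ∑ i ∈ s, a i ^ 2 * B (v i) (v i) := by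
  simp only [map_sum, map_smul, LinearMap.coe_sum, Finset.sum_apply, LinearMap.smul_apply,
    smul_eq_mul]
  refine sum_congr rfl fun i hi => ?_
  rw [sum_eq_single i (fun j _ hji => by rw [hv hji, mul_zero])
    (fun h => absurd hi h)]
  ring

variable [LinearOrder R] [IsStrictOrderedRing R]

theorem apply_sum_sum_le_card_mul_sum (hs : ∀ x, 0 ≤ B x x) (hB : B.IsSymm)
    (s : Finset ι) (v : ι → M) :
    B (∑ i ∈ s, v i) (∑ i ∈ s, v i) ≤ #s * ∑ i ∈ s, B (v i) (v i) := by
  have hpair : ∀ i j, 2 * B (v i) (v j) ≤ B (v i) (v i) + B (v j) (v j) := fun i j => by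
    have := hs (v i - v j)
    simp only [map_sub, LinearMap.sub_apply] at this
    rw [hB.eq (v j) (v i)] at this
    linarith
  have hsum := sum_le_sum fun i (_ : i ∈ s) => sum_le_sum fun j (_ : j ∈ s) => hpair i j
  simp only [sum_add_distrib, sum_const, ← mul_sum, nsmul_eq_mul] at hsum
  simp only [map_sum, LinearMap.coe_sum, Finset.sum_apply]
  rw [sum_comm]
  linarith

end LinearMap.BilinForm

theorem Finset.sum_range_two_mul_add_one (m : ℕ) : ∑ i ∈ range m, (2 * i + 1) = m ^ 2 := by
  induction m with
  | zero => rfl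
  | succ m ih => rw [sum_range_succ, ih]; ring

namespace Polynomial

theorem exists_eq_sum_smul_of_degree_eq {K : Type*} [Field K] {P : ℕ → K[X]}
    (hP : ∀ n, (P n).degree = n) {p : ℕ} {q : K[X]} (hq : q.degree < p) :
    ∃ a : ℕ → K, q = ∑ n ∈ range p, a n • P n := by
  induction p generalizing q with
  | zero => exact ⟨0, by simpa using hq⟩
  | succ p ih =>
    have hPp : (P p).coeff p ≠ 0 := coeff_ne_zero_of_eq_degree (hP p)
    set c := q.coeff p / (P p).coeff p
    obtain ⟨a, ha⟩ := ih (q := q - c • P p) <| by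
      rw [degree_lt_iff_coeff_zero]
      intro m hm
      rw [coeff_sub, coeff_smul, smul_eq_mul]
      rcases hm.eq_or_lt with rfl | hm
      · rw [div_mul_cancel₀ _ hPp, sub_self]
      · have hqm := coeff_eq_zero_of_degree_lt (hq.trans_le (by exact_mod_cast hm))
        have hPm := coeff_eq_zero_of_degree_lt ((hP p).trans_lt (by exact_mod_cast hm))
        rw [hqm, hPm, mul_zero, sub_zero]
    refine ⟨Function.update a p c, ?_⟩
    rw [sum_range_succ, Function.update_self, sum_congr rfl fun n hn => by
      rw [Function.update_of_ne (by simp at hn; omega)], ← ha, sub_add_cancel]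

theorem eval_iterate_derivative_eq_zero_of_pow_dvd {R : Type*} [CommRing R] {f g : R[X]} {x : R}
    {n i : ℕ} (hdvd : g ^ n ∣ f) (hg : g.eval x = 0) (hi : i < n) :
    (derivative^[i] f).eval x = 0 :=
  eval_eq_zero_of_dvd_of_eval_eq_zero (pow_sub_dvd_iterate_derivative_of_pow_dvd i hdvd)
    (by rw [eval_pow, hg, zero_pow (by omega)])

theorem eval_neg_iterate_derivative_X_add_C_pow_mul {R : Type*} [CommRing R] (c : R) (n : ℕ)
    (g : R[X]) : (derivative^[n] ((X + C c) ^ n * g)).eval (-c) = n ! * g.eval (-c) := by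
  rw [iterate_derivative_mul, eval_finsetSum, sum_eq_single 0]
  · simp [iterate_derivative_X_add_pow, Nat.descFactorial_self]
  · intro k hk hk0
    rw [iterate_derivative_X_add_pow, Nat.sub_sub_self (by simpa [Nat.lt_succ_iff] using hk)]
    simp [zero_pow hk0]
  · simp

theorem iterate_derivative_natDegree_eq_C {R : Type*} [Semiring R] (p : R[X]) :
    derivative^[p.natDegree] p = C (p.natDegree ! * p.leadingCoeff) := by
  rw [eq_C_of_natDegree_le_zero (p := derivative^[p.natDegree] p)
      (by simpa using natDegree_iterate_derivative p p.natDegree),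
    coeff_iterate_derivative, zero_add, Nat.descFactorial_self, nsmul_eq_mul, leadingCoeff]

theorem intervalIntegrable_eval_mul_eval (u v : ℝ[X]) (a b : ℝ) :
    IntervalIntegrable (fun x => u.eval x * v.eval x) MeasureTheory.volume a b :=
  (by fun_prop : Continuous _).intervalIntegrable a b

noncomputable def l2Inner : LinearMap.BilinForm ℝ ℝ[X] :=
  LinearMap.mk₂ ℝ (fun u v => ∫ x in (-1 : ℝ)..1, u.eval x * v.eval x)
    (fun u₁ u₂ v => by
      simp only [eval_add, add_mul]
      exact intervalIntegral.integral_add (intervalIntegrable_eval_mul_eval _ _ _ _)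
        (intervalIntegrable_eval_mul_eval _ _ _ _))
    (fun a u v => by
      simp only [eval_smul, smul_eq_mul, mul_assoc]
      exact intervalIntegral.integral_const_mul a _)
    (fun u v₁ v₂ => by
      simp only [eval_add, mul_add]
      exact intervalIntegral.integral_add (intervalIntegrable_eval_mul_eval _ _ _ _)
        (intervalIntegrable_eval_mul_eval _ _ _ _))
    (fun a u v => by
      simp only [eval_smul, smul_eq_mul, mul_left_comm _ a]
      exact intervalIntegral.integral_const_mul a _)

theorem l2Inner_apply (u v : ℝ[X]) :
    l2Inner u v = ∫ x in (-1 : ℝ)..1, u.eval x * v.eval x := rfl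

theorem l2Inner_isSymm : l2Inner.IsSymm := ⟨fun u v => by
  simp only [l2Inner_apply, mul_comm]⟩

theorem l2Inner_self_nonneg (u : ℝ[X]) : 0 ≤ l2Inner u u :=
  intervalIntegral.integral_nonneg (by norm_num) fun _ _ => mul_self_nonneg _

theorem l2Inner_derivative_left (u v : ℝ[X]) :
    l2Inner (derivative u) v =
      u.eval 1 * v.eval 1 - u.eval (-1) * v.eval (-1) - l2Inner u (derivative v) := by
  have hftc : ∫ x in (-1 : ℝ)..1, (derivative (u * v)).eval x
      = (u * v).eval 1 - (u * v).eval (-1) :=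
    intervalIntegral.integral_eq_sub_of_hasDerivAt (fun x _ => Polynomial.hasDerivAt _ x)
      ((by fun_prop : Continuous _).intervalIntegrable _ _)
  simp only [derivative_mul, eval_add, eval_mul] at hftc
  rw [intervalIntegral.integral_add (intervalIntegrable_eval_mul_eval _ _ _ _)
    (intervalIntegrable_eval_mul_eval _ _ _ _)] at hftc
  rw [l2Inner_apply, l2Inner_apply]
  linarith

theorem l2Inner_iterate_derivative_left {f : ℝ[X]} {j : ℕ}
    (hf : ∀ i < j, (derivative^[i] f).eval 1 = 0 ∧ (derivative^[i] f).eval (-1) = 0)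
    (r : ℝ[X]) : l2Inner (derivative^[j] f) r = (-1) ^ j * l2Inner f (derivative^[j] r) := by
  induction j generalizing r with
  | zero => simp
  | succ j ih =>
    obtain ⟨h1, h2⟩ := hf j j.lt_succ_self
    rw [Function.iterate_succ_apply', l2Inner_derivative_left, h1, h2,
      ih (fun i hi => hf i (hi.trans j.lt_succ_self)), Function.iterate_succ_apply]
    ring

theorem X_sq_sub_one_pow_eq {R : Type*} [CommRing R] (n : ℕ) :
    (X ^ 2 - 1 : R[X]) ^ n = (X + C (-1)) ^ n * (X + C 1) ^ n := by
  rw [← mul_pow, C_neg, C_1]; ring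

theorem monic_X_sq_sub_one {R : Type*} [Ring R] : (X ^ 2 - 1 : R[X]).Monic := by
  simpa using monic_X_pow_sub_C (1 : R) two_ne_zero

theorem natDegree_X_sq_sub_one_pow {R : Type*} [Ring R] [Nontrivial R] (n : ℕ) :
    ((X ^ 2 - 1 : R[X]) ^ n).natDegree = 2 * n := by
  rw [monic_X_sq_sub_one.natDegree_pow, mul_comm, ← C_1, natDegree_X_pow_sub_C]

/-- `rodrigues n = 2ⁿ n! Pₙ`, the Legendre polynomial without its normalisation. -/
noncomputable def rodrigues (n : ℕ) : ℝ[X] := derivative^[n] ((X ^ 2 - 1) ^ n)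

theorem l2Inner_rodrigues_left (n : ℕ) (r : ℝ[X]) :
    l2Inner (rodrigues n) r = (-1) ^ n * l2Inner ((X ^ 2 - 1) ^ n) (derivative^[n] r) := by
  rw [rodrigues, X_sq_sub_one_pow_eq]
  refine l2Inner_iterate_derivative_left (fun i hi => ⟨?_, ?_⟩) r
  · exact eval_iterate_derivative_eq_zero_of_pow_dvd (dvd_mul_right _ _) (by simp) hi
  · exact eval_iterate_derivative_eq_zero_of_pow_dvd (dvd_mul_left _ _) (by simp) hi

theorem eval_one_rodrigues (n : ℕ) : (rodrigues n).eval 1 = 2 ^ n * n ! := by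
  have := eval_neg_iterate_derivative_X_add_C_pow_mul (-1 : ℝ) n ((X + C 1) ^ n)
  rw [neg_neg] at this
  rw [rodrigues, X_sq_sub_one_pow_eq, this]
  norm_num [mul_comm]

theorem eval_neg_one_rodrigues (n : ℕ) : (rodrigues n).eval (-1) = (-2) ^ n * n ! := by
  have := eval_neg_iterate_derivative_X_add_C_pow_mul (1 : ℝ) n ((X + C (-1)) ^ n)
  rw [rodrigues, X_sq_sub_one_pow_eq, mul_comm, this]
  norm_num [mul_comm]

theorem iterate_derivative_rodrigues_eq_zero {m n : ℕ} (h : n < m) :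
    derivative^[m] (rodrigues n) = 0 := by
  rw [rodrigues, ← Function.iterate_add_apply]
  exact iterate_derivative_eq_zero (by rw [natDegree_X_sq_sub_one_pow]; omega)

theorem l2Inner_rodrigues_eq_zero {n : ℕ} {r : ℝ[X]} (h : derivative^[n] r = 0) :
    l2Inner (rodrigues n) r = 0 := by
  rw [l2Inner_rodrigues_left, h, map_zero, mul_zero]

theorem isOrthoᵢ_rodrigues : l2Inner.IsOrthoᵢ rodrigues := by
  intro m n hmn
  rcases hmn.lt_or_gt with h | h
  · show l2Inner (rodrigues m) (rodrigues n) = 0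
    rw [l2Inner_isSymm.eq]
    exact l2Inner_rodrigues_eq_zero (iterate_derivative_rodrigues_eq_zero h)
  · exact l2Inner_rodrigues_eq_zero (iterate_derivative_rodrigues_eq_zero h)

theorem degree_rodrigues (n : ℕ) : (rodrigues n).degree = n := by
  have hW := natDegree_X_sq_sub_one_pow (R := ℝ) n
  refine degree_eq_of_le_of_coeff_ne_zero (degree_le_of_natDegree_le ?_) ?_
  · have := natDegree_iterate_derivative ((X ^ 2 - 1 : ℝ[X]) ^ n) n
    rw [rodrigues]
    omega
  · have hlead : ((X ^ 2 - 1 : ℝ[X]) ^ n).coeff (n + n) = 1 := by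
      rw [← two_mul, ← hW]
      exact (monic_X_sq_sub_one.pow n).coeff_natDegree
    rw [rodrigues, coeff_iterate_derivative, hlead, nsmul_one, Nat.cast_ne_zero, Ne,
      Nat.descFactorial_eq_zero_iff_lt]
    omega

theorem l2Inner_rodrigues_self (n : ℕ) :
    l2Inner (rodrigues n) (rodrigues n) = (-1) ^ n * (2 * n)! * l2Inner ((X ^ 2 - 1) ^ n) 1 := by
  have htop : derivative^[n] (rodrigues n) = C ((2 * n)! : ℝ) := by
    rw [rodrigues, ← Function.iterate_add_apply, ← two_mul, ← natDegree_X_sq_sub_one_pow (R := ℝ),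
      iterate_derivative_natDegree_eq_C, (monic_X_sq_sub_one.pow n).leadingCoeff, mul_one]
  rw [l2Inner_rodrigues_left, htop, ← mul_one (C _), ← smul_eq_C_mul, map_smul, smul_eq_mul,
    mul_assoc]

theorem derivative_X_mul_X_sq_sub_one_pow_succ (n : ℕ) :
    derivative (X * (X ^ 2 - 1 : ℝ[X]) ^ (n + 1)) =
      (2 * n + 3 : ℝ) • (X ^ 2 - 1) ^ (n + 1) + (2 * n + 2 : ℝ) • (X ^ 2 - 1) ^ n := by
  simp only [derivative_mul, derivative_X, derivative_pow, derivative_sub, derivative_one,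
    smul_eq_C_mul, map_add, map_mul, map_natCast, map_one, map_ofNat C,
    Nat.cast_add, Nat.cast_one, Nat.cast_ofNat, add_tsub_cancel_right]
  ring

theorem l2Inner_X_sq_sub_one_pow_succ_one (n : ℕ) :
    (2 * n + 3) * l2Inner ((X ^ 2 - 1) ^ (n + 1)) 1 =
      -(2 * n + 2) * l2Inner ((X ^ 2 - 1) ^ n) 1 := by
  have h := l2Inner_derivative_left (X * (X ^ 2 - 1) ^ (n + 1)) 1
  rw [derivative_X_mul_X_sq_sub_one_pow_succ, derivative_one, map_zero] at h
  simp only [map_add, map_smul, LinearMap.add_apply, LinearMap.smul_apply, smul_eq_mul, eval_mul,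
    eval_X, eval_pow, eval_sub, eval_one, even_two.neg_pow, one_pow, sub_self,
    zero_pow n.succ_ne_zero, mul_zero] at h
  linarith

theorem factorial_mul_l2Inner_X_sq_sub_one_pow_one (n : ℕ) :
    ((2 * n + 1)! : ℝ) * l2Inner ((X ^ 2 - 1) ^ n) 1 =
      (-1) ^ n * 2 ^ (2 * n + 1) * (n ! : ℝ) ^ 2 := by
  induction n with
  | zero => norm_num [l2Inner_apply]
  | succ n ih =>
    have hrec := l2Inner_X_sq_sub_one_pow_succ_one n
    have hfac : ((2 * (n + 1) + 1)! : ℝ) = (2 * n + 3) * (2 * n + 2) * (2 * n + 1)! := by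
      rw [show 2 * (n + 1) + 1 = 2 * n + 1 + 1 + 1 by ring, Nat.factorial_succ, Nat.factorial_succ]
      push_cast
      ring
    rw [hfac, Nat.factorial_succ n]
    push_cast
    linear_combination (2 * (n : ℝ) + 2) * ((2 * n + 1)! : ℝ) * hrec - (2 * (n : ℝ) + 2) ^ 2 * ih

theorem sq_eval_rodrigues (n : ℕ) {x : ℝ} (hx : x = 1 ∨ x = -1) :
    2 * (rodrigues n).eval x ^ 2 = (2 * n + 1) * l2Inner (rodrigues n) (rodrigues n) := by
  have hsq : (rodrigues n).eval x ^ 2 = (2 ^ n * n ! : ℝ) ^ 2 := by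
    rcases hx with rfl | rfl
    · rw [eval_one_rodrigues]
    · rw [eval_neg_one_rodrigues, mul_pow, mul_pow, neg_pow, mul_pow, ← pow_mul, mul_comm n 2,
        pow_mul]
      norm_num
  have h := factorial_mul_l2Inner_X_sq_sub_one_pow_one n
  rw [Nat.factorial_succ] at h
  push_cast at h
  have hsign : ((-1) ^ n * (-1) ^ n : ℝ) = 1 := by rw [← mul_pow]; norm_num
  rw [hsq, l2Inner_rodrigues_self]
  linear_combination -(-1) ^ n * h - 2 ^ (2 * n + 1) * (n ! : ℝ) ^ 2 * hsign

theorem exists_eq_sum_smul_rodrigues {p : ℕ} {q : ℝ[X]} (hq : q.natDegree ≤ p) :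
    ∃ a : ℕ → ℝ, q = ∑ n ∈ range (p + 1), a n • rodrigues n :=
  exists_eq_sum_smul_of_degree_eq degree_rodrigues
    (degree_le_natDegree.trans_lt (by exact_mod_cast Nat.lt_succ_of_le hq))

theorem sq_eval_le_of_natDegree_le {p : ℕ} {q : ℝ[X]} (hq : q.natDegree ≤ p) {x : ℝ}
    (hx : x = 1 ∨ x = -1) : q.eval x ^ 2 ≤ (p + 1) ^ 2 / 2 * l2Inner q q := by
  obtain ⟨a, rfl⟩ := exists_eq_sum_smul_rodrigues hq
  have hodd : ∑ n ∈ range (p + 1), (2 * n + 1 : ℝ) / 2 = (p + 1) ^ 2 / 2 := by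
    rw [← sum_div]
    exact_mod_cast congrArg (fun m : ℕ => (m : ℝ) / 2) (sum_range_two_mul_add_one (p + 1))
  have htitu := sq_sum_div_le_sum_sq_div (range (p + 1)) (fun n => a n * (rodrigues n).eval x)
    (g := fun n => (2 * n + 1 : ℝ) / 2) (fun n _ => by positivity)
  have hterm : ∀ n, (a n * (rodrigues n).eval x) ^ 2 / ((2 * n + 1 : ℝ) / 2) =
      a n ^ 2 * l2Inner (rodrigues n) (rodrigues n) := fun n => by
    rw [div_eq_iff (by positivity), mul_pow]
    linear_combination a n ^ 2 / 2 * sq_eval_rodrigues n hx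
  rw [hodd, div_le_iff₀ (by positivity), sum_congr rfl fun n _ => hterm n] at htitu
  rw [l2Inner.apply_sum_smul_sum_smul_of_isOrthoᵢ isOrthoᵢ_rodrigues, eval_finsetSum]
  simpa only [eval_smul, smul_eq_mul, mul_comm ((p + 1 : ℝ) ^ 2 / 2)] using htitu

theorem l2Inner_derivative_rodrigues_le (n : ℕ) :
    l2Inner (derivative (rodrigues n)) (derivative (rodrigues n)) ≤
      2 * (n + 1) ^ 3 * l2Inner (rodrigues n) (rodrigues n) := by
  set R := rodrigues n
  set D := l2Inner (derivative R) (derivative R)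
  set N := l2Inner R R
  have hboundary :
      D = R.eval 1 * (derivative R).eval 1 - R.eval (-1) * (derivative R).eval (-1) := by
    have horth : l2Inner R (derivative (derivative R)) = 0 := by
      refine l2Inner_rodrigues_eq_zero ?_
      rw [← Function.iterate_succ_apply, ← Function.iterate_succ_apply]
      exact iterate_derivative_rodrigues_eq_zero (by omega)
    rw [show D = l2Inner (derivative R) (derivative R) from rfl, l2Inner_derivative_left, horth,
      sub_zero]
  have hdeg : (derivative R).natDegree ≤ n :=
    (natDegree_derivative_le R).trans
      (by rw [natDegree_eq_of_degree_eq_some (degree_rodrigues n)]; omega)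
  have hR1 : 2 * R.eval 1 ^ 2 = (2 * n + 1) * N := sq_eval_rodrigues n (by simp)
  have hR2 : 2 * R.eval (-1) ^ 2 = (2 * n + 1) * N := sq_eval_rodrigues n (by simp)
  have hD1 : (derivative R).eval 1 ^ 2 ≤ (n + 1) ^ 2 / 2 * D :=
    sq_eval_le_of_natDegree_le hdeg (by simp)
  have hD2 : (derivative R).eval (-1) ^ 2 ≤ (n + 1) ^ 2 / 2 * D :=
    sq_eval_le_of_natDegree_le hdeg (by simp)
  have hN : 0 ≤ N := l2Inner_self_nonneg R
  have hD : 0 ≤ D := l2Inner_self_nonneg _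
  have hsq : D ^ 2 ≤ 2 * (n + 1) ^ 3 * N * D := calc
    D ^ 2 ≤ 2 * (R.eval 1 ^ 2 * (derivative R).eval 1 ^ 2 +
        R.eval (-1) ^ 2 * (derivative R).eval (-1) ^ 2) := by
      rw [hboundary]
      nlinarith [sq_nonneg
        (R.eval 1 * (derivative R).eval 1 + R.eval (-1) * (derivative R).eval (-1))]
    _ ≤ 2 * ((2 * n + 1) / 2 * N * ((n + 1) ^ 2 / 2 * D) +
        (2 * n + 1) / 2 * N * ((n + 1) ^ 2 / 2 * D)) := by
      gcongr
      · linarith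
      · linarith
    _ = (2 * n + 1) * (n + 1) ^ 2 * N * D := by ring
    _ ≤ 2 * (n + 1) ^ 3 * N * D := by
      have : (2 * n + 1 : ℝ) * (n + 1) ^ 2 ≤ 2 * (n + 1) ^ 3 := by nlinarith
      exact mul_le_mul_of_nonneg_right (mul_le_mul_of_nonneg_right this hN) hD
  rcases hD.eq_or_lt with h | h
  · rw [← h]; positivity
  · exact le_of_mul_le_mul_right (by rwa [sq] at hsq) h

theorem l2Inner_derivative_self_le {p : ℕ} {q : ℝ[X]} (hq : q.natDegree ≤ p) :
    l2Inner (derivative q) (derivative q) ≤ 2 * (p + 1) ^ 4 * l2Inner q q := by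
  obtain ⟨a, rfl⟩ := exists_eq_sum_smul_rodrigues hq
  calc l2Inner (derivative (∑ n ∈ range (p + 1), a n • rodrigues n))
        (derivative (∑ n ∈ range (p + 1), a n • rodrigues n))
      ≤ (p + 1) * ∑ n ∈ range (p + 1),
          l2Inner (a n • derivative (rodrigues n)) (a n • derivative (rodrigues n)) := by
        simpa only [derivative_sum, derivative_smul, card_range, Nat.cast_add, Nat.cast_one] using
          l2Inner.apply_sum_sum_le_card_mul_sum l2Inner_self_nonneg l2Inner_isSymm (range (p + 1))
            fun n => a n • derivative (rodrigues n)
    _ = (p + 1) * ∑ n ∈ range (p + 1),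
          a n ^ 2 * l2Inner (derivative (rodrigues n)) (derivative (rodrigues n)) := by
        simp only [map_smul, LinearMap.smul_apply, smul_eq_mul, ← mul_assoc, ← sq]
    _ ≤ (p + 1) * ∑ n ∈ range (p + 1),
          a n ^ 2 * (2 * (p + 1) ^ 3 * l2Inner (rodrigues n) (rodrigues n)) := by
        gcongr with n hn
        have hnp : (n : ℝ) ≤ p := by exact_mod_cast Nat.lt_succ_iff.mp (mem_range.mp hn)
        refine (l2Inner_derivative_rodrigues_le n).trans ?_
        gcongr
        exact l2Inner_self_nonneg _
    _ = 2 * (p + 1) ^ 4 * l2Inner (∑ n ∈ range (p + 1), a n • rodrigues n)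
          (∑ n ∈ range (p + 1), a n • rodrigues n) := by
        rw [l2Inner.apply_sum_smul_sum_smul_of_isOrthoᵢ isOrthoᵢ_rodrigues, mul_sum, mul_sum]
        exact sum_congr rfl fun n _ => by ring

end Polynomial

/-- Markov-type $L^2$ inverse estimate on the reference interval: there is a
constant `C > 0` such that for every `p` and every polynomial `q` of degree at
most `p`, `∫_{-1}^{1} (q'(x))^2 dx ≤ C^2 (p+1)^4 ∫_{-1}^{1} (q(x))^2 dx`. -/
theorem markov_L2_inverse_estimate :
    ∃ C : ℝ, 0 < C ∧ ∀ (p : ℕ) (q : Polynomial ℝ), q.natDegree ≤ p →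
      ∫ x in (-1 : ℝ)..1, (q.derivative.eval x) ^ 2 ≤
        C ^ 2 * ((p : ℝ) + 1) ^ 4 * ∫ x in (-1 : ℝ)..1, (q.eval x) ^ 2 := by
  refine ⟨√2, by positivity, fun p q hq => ?_⟩
  simp only [Real.sq_sqrt zero_le_two, sq (eval _ _), ← l2Inner_apply]
  exact l2Inner_derivative_self_le hq
end

section
/- Let N ≥ 1 and let 0 = x₀ < x₁ < ⋯ < x_N = 1 be a partition of [0,1]. Let b : ℝ → ℝ be continuously differentiable on [0,1] with b(x) > 0 for all x ∈ [0,1], let c : ℝ → ℝ be continuous on [0,1], and for each i = 0, …, N-1 let v_i : ℝ → ℝ be continuously differentiable on [x_i, x_{i+1}]. Then the one-dimensional upwind discontinuous Galerkin bilinear form evaluated on the piecewise function v = (v_i) satisfies the identity Σ_{i=0}^{N-1} ∫_{x_i}^{x_{i+1}} ( b(x) v_i'(x) + c(x) v_i(x) ) v_i(x) dx + Σ_{i=1}^{N-1} b(x_i) ( v_i(x_i) - v_{i-1}(x_i) ) v_i(x_i) + b(0) v₀(0)² = Σ_{i=0}^{N-1} ∫_{x_i}^{x_{i+1}} ( c(x)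 - b'(x)/2 ) v_i(x)² dx + (1/2) b(0) v₀(0)² + (1/2) b(1) v_{N-1}(1)² + Σ_{i=1}^{N-1} (1/2) b(x_i) ( v_i(x_i) - v_{i-1}(x_i) )². -/
/-!
On each element `(b v' + c v) v = (c - b'/2) v² + (b v² / 2)'`, so the volume term of the form is
the volume term of the norm plus the boundary values `b v² / 2` at the two ends of the element.
At an interior node the outflow `½ b v_{i-1}²` of the left element, the inflow `-½ b v_i²` of the
right one and the upwind flux `b (v_i - v_{i-1}) v_i` add up to `½ b (v_i - v_{i-1})²`, while the
inflow at `0` combines with `b(0) v₀(0)²` into `½ b(0) v₀(0)²`.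
-/

open Set MeasureTheory

section Element

variable {a a' : ℝ} {b c w : ℝ → ℝ}

theorem integral_deriv_half_mul_sq {b' w' : ℝ → ℝ} (hle : a ≤ a')
    (hb : ContinuousOn b (Icc a a')) (hw : ContinuousOn w (Icc a a'))
    (hb' : ∀ t ∈ Ioo a a', HasDerivAt b (b' t) t) (hw' : ∀ t ∈ Ioo a a', HasDerivAt w (w' t) t)
    (hint : IntervalIntegrable (fun t => b t * (w t * w' t) + b' t / 2 * w t ^ 2) volume a a') :
    ∫ t in a..a', (b t * (w t * w' t) + b' t / 2 * w t ^ 2)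
      = (b a' * w a' ^ 2 - b a * w a ^ 2) / 2 := by
  have hderiv : ∀ t ∈ Ioo a a', HasDerivAt (fun t => b t * w t ^ 2 / 2)
      (b t * (w t * w' t) + b' t / 2 * w t ^ 2) t := fun t ht =>
    (((hb' t ht).mul ((hw' t ht).pow 2)).div_const 2).congr_deriv
      (by simp only [Pi.pow_apply]; ring)
  rw [intervalIntegral.integral_eq_sub_of_hasDerivAt_of_le hle
    ((hb.mul (hw.pow 2)).div_const 2) hderiv hint, sub_div]
  rfl

theorem integral_convection_reaction_mul_self {s : Set ℝ} (hlt : a < a') (hs : UniqueDiffOn ℝ s)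
    (hsub : Icc a a' ⊆ s) (hb : ContDiffOn ℝ 1 b s) (hc : ContinuousOn c (Icc a a'))
    (hw : ContDiffOn ℝ 1 w (Icc a a')) :
    ∫ t in a..a', (b t * derivWithin w (Icc a a') t + c t * w t) * w t
      = (∫ t in a..a', (c t - derivWithin b s t / 2) * w t ^ 2)
        + (b a' * w a' ^ 2 - b a * w a ^ 2) / 2 := by
  have hbc : ContinuousOn b (Icc a a') := hb.continuousOn.mono hsub
  have hb'c : ContinuousOn (derivWithin b s) (Icc a a') :=
    (hb.continuousOn_derivWithin hs le_rfl).mono hsub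
  have hwc : ContinuousOn w (Icc a a') := hw.continuousOn
  have hw'c : ContinuousOn (derivWithin w (Icc a a')) (Icc a a') :=
    hw.continuousOn_derivWithin (uniqueDiffOn_Icc hlt) le_rfl
  have hb' : ∀ t ∈ Ioo a a', HasDerivAt b (derivWithin b s t) t := fun t ht =>
    (hb.differentiableOn one_ne_zero t (hsub (Ioo_subset_Icc_self ht))).hasDerivWithinAt.hasDerivAt
      (Filter.mem_of_superset (Icc_mem_nhds ht.1 ht.2) hsub)
  have hw' : ∀ t ∈ Ioo a a', HasDerivAt w (derivWithin w (Icc a a') t) t := fun t ht =>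
    (hw.differentiableOn one_ne_zero t (Ioo_subset_Icc_self ht)).hasDerivWithinAt.hasDerivAt
      (Icc_mem_nhds ht.1 ht.2)
  have hflux : IntervalIntegrable (fun t => b t * (w t * derivWithin w (Icc a a') t)
      + derivWithin b s t / 2 * w t ^ 2) volume a a' :=
    ContinuousOn.intervalIntegrable_of_Icc hlt.le
      ((hbc.mul (hwc.mul hw'c)).add ((hb'c.div_const 2).mul (hwc.pow 2)))
  have hvol : IntervalIntegrable (fun t => (c t - derivWithin b s t / 2) * w t ^ 2) volume a a' :=
    ContinuousOn.intervalIntegrable_of_Icc hlt.le ((hc.sub (hb'c.div_const 2)).mul (hwc.pow 2))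
  rw [← integral_deriv_half_mul_sq hlt.le hbc hwc hb' hw' hflux,
    ← intervalIntegral.integral_add hvol hflux]
  exact intervalIntegral.integral_congr fun t _ => by ring

end Element

/-- `u i j` is the trace of the `i`-th element function at the node `x_j`, and `β j = b(x_j)`. -/
theorem sum_half_trace_sq_add_upwind_flux (β : ℕ → ℝ) (u : ℕ → ℕ → ℝ) {N : ℕ} (hN : 1 ≤ N) :
    (∑ i ∈ Finset.range N, (β (i + 1) * u i (i + 1) ^ 2 - β i * u i i ^ 2) / 2)
      + (∑ i ∈ Finset.Ico 1 N, β i * (u i i - u (i - 1) i) * u i i) + β 0 * u 0 0 ^ 2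
    = (1 / 2) * β 0 * u 0 0 ^ 2 + (1 / 2) * β N * u (N - 1) N ^ 2
      + ∑ i ∈ Finset.Ico 1 N, (1 / 2) * β i * (u i i - u (i - 1) i) ^ 2 := by
  induction N, hN using Nat.le_induction with
  | base => simp only [Finset.sum_range_one, Finset.Ico_self, Finset.sum_empty]; ring
  | succ n hn ih =>
    rw [Finset.sum_range_succ, Finset.sum_Ico_succ_top hn, Finset.sum_Ico_succ_top hn,
      Nat.add_sub_cancel]
    linear_combination ih

theorem upwind_dG_coercivity_identity_1d_general
    (N : ℕ) (hN : 1 ≤ N) (x : ℕ → ℝ)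
    (hx0 : x 0 = 0) (hxN : x N = 1)
    (hxmono : ∀ i < N, x i < x (i + 1))
    (b c : ℝ → ℝ)
    (hb : ContDiffOn ℝ 1 b (Set.Icc (0 : ℝ) 1))
    (hc : ContinuousOn c (Set.Icc (0 : ℝ) 1))
    (v : ℕ → ℝ → ℝ)
    (hv : ∀ i < N, ContDiffOn ℝ 1 (v i) (Set.Icc (x i) (x (i + 1)))) :
    (∑ i ∈ Finset.range N, ∫ t in x i..x (i + 1),
        (b t * derivWithin (v i) (Set.Icc (x i) (x (i + 1))) t + c t * v i t) * v i t)
      + (∑ i ∈ Finset.Ico 1 N,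
          b (x i) * (v i (x i) - v (i - 1) (x i)) * v i (x i))
      + b 0 * (v 0 0) ^ 2
    = (∑ i ∈ Finset.range N, ∫ t in x i..x (i + 1),
        (c t - derivWithin b (Set.Icc (0 : ℝ) 1) t / 2) * (v i t) ^ 2)
      + (1 / 2) * b 0 * (v 0 0) ^ 2
      + (1 / 2) * b 1 * (v (N - 1) 1) ^ 2
      + (∑ i ∈ Finset.Ico 1 N,
          (1 / 2) * b (x i) * (v i (x i) - v (i - 1) (x i)) ^ 2) := by
  have hmono : MonotoneOn x (Iic N) :=
    (strictMonoOn_Iic_of_lt_succ fun m hm => by simpa using hxmono m hm).monotoneOn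
  have hsub : ∀ i < N, Icc (x i) (x (i + 1)) ⊆ Icc 0 1 := fun i hi =>
    Icc_subset_Icc (hx0 ▸ hmono (Nat.zero_le N) hi.le (Nat.zero_le i))
      (hxN ▸ hmono (Nat.succ_le_of_lt hi) (le_refl N) (Nat.succ_le_of_lt hi))
  have hflux := sum_half_trace_sq_add_upwind_flux (fun j => b (x j)) (fun i j => v i (x j)) hN
  simp only [hx0, hxN] at hflux
  rw [Finset.sum_congr rfl fun i hi => integral_convection_reaction_mul_self
      (hxmono i (Finset.mem_range.1 hi)) (uniqueDiffOn_Icc one_pos)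
      (hsub i (Finset.mem_range.1 hi)) hb (hc.mono (hsub i (Finset.mem_range.1 hi)))
      (hv i (Finset.mem_range.1 hi)),
    Finset.sum_add_distrib]
  linear_combination hflux

/-- One-dimensional coercivity identity `B_n(v, v) = |||v|||²_dG` for the
upwind dG bilinear form, with strictly positive convection coefficient `b`:
for a partition `0 = x₀ < x₁ < ⋯ < x_N = 1` of `[0, 1]` and piecewise `C¹`
functions `v_i` on the elements `[x_i, x_{i+1}]`, the bilinear form evaluated
at `(v, v)` equals the squared dG norm of `v`. -/
theorem upwind_dG_coercivity_identity_1d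
    (N : ℕ) (hN : 1 ≤ N) (x : ℕ → ℝ)
    (hx0 : x 0 = 0) (hxN : x N = 1)
    (hxmono : ∀ i < N, x i < x (i + 1))
    (b c : ℝ → ℝ)
    (hb : ContDiffOn ℝ 1 b (Set.Icc (0 : ℝ) 1))
    (hbpos : ∀ t ∈ Set.Icc (0 : ℝ) 1, 0 < b t)
    (hc : ContinuousOn c (Set.Icc (0 : ℝ) 1))
    (v : ℕ → ℝ → ℝ)
    (hv : ∀ i < N, ContDiffOn ℝ 1 (v i) (Set.Icc (x i) (x (i + 1)))) :
    (∑ i ∈ Finset.range N, ∫ t in x i..x (i + 1),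
        (b t * derivWithin (v i) (Set.Icc (x i) (x (i + 1))) t + c t * v i t) * v i t)
      + (∑ i ∈ Finset.Ico 1 N,
          b (x i) * (v i (x i) - v (i - 1) (x i)) * v i (x i))
      + b 0 * (v 0 0) ^ 2
    = (∑ i ∈ Finset.range N, ∫ t in x i..x (i + 1),
        (c t - derivWithin b (Set.Icc (0 : ℝ) 1) t / 2) * (v i t) ^ 2)
      + (1 / 2) * b 0 * (v 0 0) ^ 2
      + (1 / 2) * b 1 * (v (N - 1) 1) ^ 2
      + (∑ i ∈ Finset.Ico 1 N,
          (1 / 2) * b (x i) * (v i (x i) - v (i - 1) (x i)) ^ 2) :=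
  upwind_dG_coercivity_identity_1d_general N hN x hx0 hxN hxmono b c hb hc v hv
end

section
/- Let N ≥ 1 and let 0 = x₀ < x₁ < ⋯ < x_N = 1 be a partition of [0,1]. Let b : ℝ → ℝ be continuously differentiable on [0,1] with b(x) > 0 for all x ∈ [0,1], let c : ℝ → ℝ be continuous on [0,1], and suppose there exists c_s > 0 with c(x) - b'(x)/2 ≥ c_s for all x ∈ [0,1]. Then for all functions v_i : ℝ → ℝ (i = 0, …, N-1) continuously differentiable on [x_i, x_{i+1}], one has Σ_{i=0}^{N-1} ∫_{x_i}^{x_{i+1}} ( b(x) v_i'(x) + c(x) v_i(x) ) v_i(x) dx + Σ_{i=1}^{N-1} b(x_i) ( v_i(x_i) - v_{i-1}(x_i) ) v_i(x_i) + b(0) v₀(0)² ≥ c_s Σ_{i=0}^{N-1} ∫_{x_i}^{x_{i+1}} v_i(x)² dx. -/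
/-!
On each element, `(b w' + c w) w = (b w²)' / 2 + (c - b' / 2) w²`, so the element integral is
`[b w² / 2]` between the endpoints plus at least `c_s ∫ w²`. Summed over the elements, the
endpoint terms together with the upwind jump and inflow terms collapse to
`(b(1) v_{N-1}(1)² + b(0) v₀(0)² + Σ b(x_i) [v]_i²) / 2 ≥ 0`, because `b > 0`.
-/

open Set Finset intervalIntegral

lemma mem_Icc_of_forall_lt_succ {x : ℕ → ℝ} {N : ℕ} (hx : ∀ i < N, x i < x (i + 1))
    {i : ℕ} (hi : i ≤ N) : x i ∈ Icc (x 0) (x N) :=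
  have hmono := (strictMonoOn_Iic_of_lt_succ hx).monotoneOn
  ⟨hmono (mem_Iic.2 (Nat.zero_le N)) hi (Nat.zero_le i), hmono hi self_mem_Iic hi⟩

section Element

variable {a d : ℝ} {b c w : ℝ → ℝ}

lemma integral_derivWithin_mul_sq (had : a < d) (hb : ContDiffOn ℝ 1 b (Icc a d))
    (hw : ContDiffOn ℝ 1 w (Icc a d)) :
    ∫ t in a..d, (derivWithin b (Icc a d) t * w t ^ 2
        + 2 * b t * derivWithin w (Icc a d) t * w t) = b d * w d ^ 2 - b a * w a ^ 2 := by
  rw [← integral_derivWithin_Icc_of_contDiffOn_Icc (hb.mul (hw.pow 2)) had.le]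
  refine integral_congr fun t ht => ?_
  rw [uIcc_of_le had.le] at ht
  have hderiv := (hb.differentiableOn one_ne_zero t ht).hasDerivWithinAt.fun_mul
    ((hw.differentiableOn one_ne_zero t ht).hasDerivWithinAt.fun_pow 2)
  rw [hderiv.derivWithin (uniqueDiffOn_Icc had t ht)]
  ring

lemma integral_upwind_element_eq (had : a < d) (hb : ContDiffOn ℝ 1 b (Icc a d))
    (hc : ContinuousOn c (Icc a d)) (hw : ContDiffOn ℝ 1 w (Icc a d)) :
    ∫ t in a..d, (b t * derivWithin w (Icc a d) t + c t * w t) * w t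
      = (b d * w d ^ 2 - b a * w a ^ 2) / 2
        + ∫ t in a..d, (c t - derivWithin b (Icc a d) t / 2) * w t ^ 2 := by
  have hb' := hb.continuousOn_derivWithin (uniqueDiffOn_Icc had) le_rfl
  have hw' := hw.continuousOn_derivWithin (uniqueDiffOn_Icc had) le_rfl
  rw [← integral_derivWithin_mul_sq had hb hw, ← integral_div, ← integral_add]
  · exact integral_congr fun t _ => by ring
  · exact ((((hb'.mul (hw.continuousOn.pow 2)).add
      (((continuousOn_const.mul hb.continuousOn).mul hw').mul hw.continuousOn)).div_const 2)
      |>.intervalIntegrable_of_Icc had.le)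
  · exact ((hc.sub (hb'.div_const 2)).mul (hw.continuousOn.pow 2)).intervalIntegrable_of_Icc had.le

lemma upwind_element_coercive {cs : ℝ} (had : a < d) (hb : ContDiffOn ℝ 1 b (Icc a d))
    (hc : ContinuousOn c (Icc a d)) (hw : ContDiffOn ℝ 1 w (Icc a d))
    (hwp : ∀ t ∈ Icc a d, cs ≤ c t - derivWithin b (Icc a d) t / 2) :
    cs * (∫ t in a..d, w t ^ 2) + (b d * w d ^ 2 - b a * w a ^ 2) / 2
      ≤ ∫ t in a..d, (b t * derivWithin w (Icc a d) t + c t * w t) * w t := by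
  have hb' := hb.continuousOn_derivWithin (uniqueDiffOn_Icc had) le_rfl
  rw [integral_upwind_element_eq had hb hc hw, add_comm, ← integral_const_mul]
  gcongr
  refine integral_mono_on had.le ?_ ?_ fun t ht => ?_
  · exact (continuousOn_const.mul (hw.continuousOn.pow 2)).intervalIntegrable_of_Icc had.le
  · exact ((hc.sub (hb'.div_const 2)).mul (hw.continuousOn.pow 2)).intervalIntegrable_of_Icc had.le
  · exact mul_le_mul_of_nonneg_right (hwp t ht) (sq_nonneg _)

end Element

section Boundary

variable {p u w : ℕ → ℝ} {N : ℕ}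

/-- `u i` and `w i` are the traces at node `i` from the upwind element `i - 1` and from
element `i`. -/
lemma upwind_boundary_terms_eq (hN : 1 ≤ N) :
    ∑ i ∈ range N, (p (i + 1) * u (i + 1) ^ 2 - p i * w i ^ 2) / 2
        + ∑ i ∈ Ico 1 N, p i * (w i - u i) * w i + p 0 * w 0 ^ 2
      = (p N * u N ^ 2 + p 0 * w 0 ^ 2 + ∑ i ∈ Ico 1 N, p i * (w i - u i) ^ 2) / 2 := by
  induction N, hN using Nat.le_induction with
  | base => simp only [range_one, sum_singleton, Ico_self, sum_empty]; ring
  | succ n hn ih =>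
    rw [sum_range_succ, sum_Ico_succ_top hn, sum_Ico_succ_top hn]
    linear_combination ih

lemma upwind_boundary_terms_nonneg (hN : 1 ≤ N) (hp : ∀ i ≤ N, 0 ≤ p i) :
    0 ≤ ∑ i ∈ range N, (p (i + 1) * u (i + 1) ^ 2 - p i * w i ^ 2) / 2
        + ∑ i ∈ Ico 1 N, p i * (w i - u i) * w i + p 0 * w 0 ^ 2 := by
  rw [upwind_boundary_terms_eq hN]
  have hjumps : 0 ≤ ∑ i ∈ Ico 1 N, p i * (w i - u i) ^ 2 :=
    sum_nonneg fun i hi => mul_nonneg (hp i (mem_Ico.1 hi).2.le) (sq_nonneg _)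
  have hpN := hp N le_rfl
  have hp0 := hp 0 N.zero_le
  positivity

end Boundary

theorem upwind_dG_coercivity_1d_general
    (N : ℕ) (hN : 1 ≤ N) (x : ℕ → ℝ)
    (hx0 : x 0 = 0) (hxN : x N = 1)
    (hxmono : ∀ i < N, x i < x (i + 1))
    (b c : ℝ → ℝ)
    (hb : ContDiffOn ℝ 1 b (Set.Icc (0 : ℝ) 1))
    (hbpos : ∀ t ∈ Set.Icc (0 : ℝ) 1, 0 < b t)
    (hc : ContinuousOn c (Set.Icc (0 : ℝ) 1))
    (cs : ℝ)
    (hwp : ∀ t ∈ Set.Icc (0 : ℝ) 1,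
      cs ≤ c t - derivWithin b (Set.Icc (0 : ℝ) 1) t / 2)
    (v : ℕ → ℝ → ℝ)
    (hv : ∀ i < N, ContDiffOn ℝ 1 (v i) (Set.Icc (x i) (x (i + 1)))) :
    cs * ∑ i ∈ Finset.range N, (∫ t in x i..x (i + 1), (v i t) ^ 2) ≤
      (∑ i ∈ Finset.range N, ∫ t in x i..x (i + 1),
          (b t * derivWithin (v i) (Set.Icc (x i) (x (i + 1))) t + c t * v i t) * v i t)
        + (∑ i ∈ Finset.Ico 1 N,
            b (x i) * (v i (x i) - v (i - 1) (x i)) * v i (x i))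
        + b 0 * (v 0 0) ^ 2 := by
  have hnode : ∀ i ≤ N, x i ∈ Icc (0 : ℝ) 1 := fun i hi => by
    simpa only [hx0, hxN] using mem_Icc_of_forall_lt_succ hxmono hi
  have helem : ∀ i < N, Icc (x i) (x (i + 1)) ⊆ Icc 0 1 := fun i hi =>
    Icc_subset_Icc (hnode i hi.le).1 (hnode (i + 1) hi).2
  have hlocal : ∀ i ∈ range N, cs * (∫ t in x i..x (i + 1), v i t ^ 2)
      + (b (x (i + 1)) * v i (x (i + 1)) ^ 2 - b (x i) * v i (x i) ^ 2) / 2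
      ≤ ∫ t in x i..x (i + 1),
          (b t * derivWithin (v i) (Icc (x i) (x (i + 1))) t + c t * v i t) * v i t := by
    intro i hi
    rw [Finset.mem_range] at hi
    refine upwind_element_coercive (hxmono i hi) (hb.mono (helem i hi)) (hc.mono (helem i hi))
      (hv i hi) fun t ht => ?_
    rw [derivWithin_subset (helem i hi) (uniqueDiffOn_Icc (hxmono i hi) t ht)
      (hb.differentiableOn one_ne_zero t (helem i hi ht))]
    exact hwp t (helem i hi ht)
  have hsum := sum_le_sum hlocal
  rw [sum_add_distrib, ← mul_sum] at hsum
  have hboundary := upwind_boundary_terms_nonneg (p := fun i => b (x i))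
    (u := fun i => v (i - 1) (x i)) (w := fun i => v i (x i)) hN
    fun i hi => (hbpos _ (hnode i hi)).le
  simp only [Nat.add_sub_cancel, hx0] at hboundary
  linarith

/-- One-dimensional coercivity of the upwind dG bilinear form under the
well-posedness assumption `c - b'/2 ≥ c_s > 0`: for a partition
`0 = x₀ < x₁ < ⋯ < x_N = 1` of `[0, 1]` and piecewise `C¹` functions `v_i` on
the elements `[x_i, x_{i+1}]`, the bilinear form at `(v, v)` dominates
`c_s ‖v‖²_{L²}`. -/
theorem upwind_dG_coercivity_1d
    (N : ℕ) (hN : 1 ≤ N) (x : ℕ → ℝ)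
    (hx0 : x 0 = 0) (hxN : x N = 1)
    (hxmono : ∀ i < N, x i < x (i + 1))
    (b c : ℝ → ℝ)
    (hb : ContDiffOn ℝ 1 b (Set.Icc (0 : ℝ) 1))
    (hbpos : ∀ t ∈ Set.Icc (0 : ℝ) 1, 0 < b t)
    (hc : ContinuousOn c (Set.Icc (0 : ℝ) 1))
    (cs : ℝ) (hcs : 0 < cs)
    (hwp : ∀ t ∈ Set.Icc (0 : ℝ) 1,
      cs ≤ c t - derivWithin b (Set.Icc (0 : ℝ) 1) t / 2)
    (v : ℕ → ℝ → ℝ)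
    (hv : ∀ i < N, ContDiffOn ℝ 1 (v i) (Set.Icc (x i) (x (i + 1)))) :
    cs * ∑ i ∈ Finset.range N, (∫ t in x i..x (i + 1), (v i t) ^ 2) ≤
      (∑ i ∈ Finset.range N, ∫ t in x i..x (i + 1),
          (b t * derivWithin (v i) (Set.Icc (x i) (x (i + 1))) t + c t * v i t) * v i t)
        + (∑ i ∈ Finset.Ico 1 N,
            b (x i) * (v i (x i) - v (i - 1) (x i)) * v i (x i))
        + b 0 * (v 0 0) ^ 2 :=
  upwind_dG_coercivity_1d_general N hN x hx0 hxN hxmono b c hb hbpos hc cs hwp v hv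
end
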